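/- arXiv:1604.04274 — 2 statements merged into one kernel-verified Lean document; each statement's English description precedes it below -/
import Mathlib

section
/- Let 0 < a < b be reals, α ∈ (0,1), and x : [a,b] → ℝ of class C². For each positive integer n set ΔT = ln(b/a)/n and t_k = a·exp(k·ΔT). Then the discrete approximation converges uniformly to the Hadamard derivative as n → ∞: for every ε > 0 there exists n₀ such that for all n ≥ n₀ and all N ∈ {1,…,n}, | ₐD_{t_N}^α x − (x(a)/Γ(1−α))·(ln(t_N/a))^{−α} − ψ·∑_{k=1}^{N} ω_{N−k+1}^α · ((x(t_k) − x(t_{k−1}))/exp(k·ΔT))·t_k | < ε, where ψ = (ΔT)^{1−α}/(a·(1−exp(−ΔT))·Γ(2−α)) and ω_k^α = k^{1−α} − (k−1)^{1−α}. -/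
/-!
Writing `x' τ = τ⁻¹ * (τ * x' τ)`, the integral in the Hadamard derivative at `t_N` is
`∫ w φ` with the nonnegative kernel `w τ = log (t_N / τ) ^ (-α) * τ⁻¹` and `φ τ = τ * x' τ`.
On the logarithmic grid the kernel integrates exactly over each cell `[t_k, t_{k+1}]` to
`ΔT ^ (1 - α) * ω_{N-k} / (1 - α)`, so the scheme is the product-integration rule replacing `φ`
on that cell by the constant `t_{k+1} * (x t_{k+1} - x t_k) / (t_{k+1} - t_k)`. By the mean
value theorem this constant is `t_{k+1} * x' σ` for some `σ` in the cell, hence it is within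
`O(ΔT)` of `φ` there, as `φ` is Lipschitz. The error is thus at most
`O(ΔT) * ∫_a^{t_N} w = O(ΔT) * log (t_N / a) ^ (1 - α) / (1 - α) = O(1 / n)`, uniformly in `N`.
-/

open Real Set intervalIntegral MeasureTheory

section HadamardKernel

variable {α T : ℝ}

theorem hasDerivAt_neg_log_div_rpow (hα : α < 1) {s : ℝ} (hs : 0 < s) (hsT : s < T) :
    HasDerivAt (fun σ => -(log (T / σ) ^ (1 - α) / (1 - α))) (log (T / s) ^ (-α) * s⁻¹) s := by
  have hlog : HasDerivAt (fun σ => log (T / σ)) (-s⁻¹) s := by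
    refine (((hasDerivAt_const s T).div (hasDerivAt_id s) hs.ne').log
      (div_pos (hs.trans hsT) hs).ne').congr_deriv ?_
    simp only [id_eq, Pi.div_apply, zero_mul, zero_sub]
    field_simp [(hs.trans hsT).ne']
  have hpos : 0 < log (T / s) := log_pos ((one_lt_div hs).2 hsT)
  refine ((hlog.rpow_const (p := 1 - α) (Or.inl hpos.ne')).div_const (1 - α)).neg.congr_deriv ?_
  rw [show 1 - α - 1 = -α by ring]
  field_simp [(sub_pos.2 hα).ne']

theorem continuousOn_neg_log_div_rpow (hα : α < 1) {c d : ℝ} (hc : 0 < c) (hT : 0 < T) :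
    ContinuousOn (fun σ => -(log (T / σ) ^ (1 - α) / (1 - α))) (Icc c d) := by
  refine ((ContinuousOn.rpow_const ?_ fun _ _ => Or.inr (by linarith)).div_const _).neg
  refine ContinuousOn.log (continuousOn_const.div continuousOn_id fun σ hσ => ?_) fun σ hσ => ?_
  · exact (hc.trans_le hσ.1).ne'
  · exact (div_pos hT (hc.trans_le hσ.1)).ne'

theorem log_div_rpow_mul_inv_nonneg {s : ℝ} (hs : 0 < s) (hsT : s ≤ T) :
    0 ≤ log (T / s) ^ (-α) * s⁻¹ :=
  mul_nonneg (rpow_nonneg (log_nonneg ((one_le_div hs).2 hsT)) _) (inv_nonneg.2 hs.le)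

theorem intervalIntegrable_log_div_rpow_mul_inv (hα : α < 1) {c d : ℝ} (hc : 0 < c)
    (hcd : c ≤ d) (hdT : d ≤ T) :
    IntervalIntegrable (fun s => log (T / s) ^ (-α) * s⁻¹) volume c d := by
  rw [intervalIntegrable_iff_integrableOn_Ioc_of_le hcd]
  exact integrableOn_deriv_of_nonneg (continuousOn_neg_log_div_rpow hα hc (by linarith))
    (fun s hs => hasDerivAt_neg_log_div_rpow hα (hc.trans hs.1) (hs.2.trans_le hdT))
    fun s hs => log_div_rpow_mul_inv_nonneg (hc.trans hs.1) (hs.2.trans_le hdT).le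

theorem integral_log_div_rpow_mul_inv (hα : α < 1) {c d : ℝ} (hc : 0 < c)
    (hcd : c ≤ d) (hdT : d ≤ T) :
    ∫ s in c..d, log (T / s) ^ (-α) * s⁻¹
      = (log (T / c) ^ (1 - α) - log (T / d) ^ (1 - α)) / (1 - α) := by
  rw [integral_eq_sub_of_hasDerivAt_of_le hcd (continuousOn_neg_log_div_rpow hα hc (by linarith))
    (fun s hs => hasDerivAt_neg_log_div_rpow hα (hc.trans hs.1) (hs.2.trans_le hdT))
    (intervalIntegrable_log_div_rpow_mul_inv hα hc hcd hdT)]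
  ring

end HadamardKernel

theorem abs_integral_mul_sub_const_mul_le {w g : ℝ → ℝ} {p q c δ : ℝ} (hpq : p ≤ q)
    (hw : IntervalIntegrable w volume p q)
    (hwg : IntervalIntegrable (fun τ => w τ * g τ) volume p q)
    (hw0 : ∀ τ ∈ Icc p q, 0 ≤ w τ) (hg : ∀ τ ∈ Icc p q, |g τ - c| ≤ δ) :
    |(∫ τ in p..q, w τ * g τ) - c * ∫ τ in p..q, w τ| ≤ δ * ∫ τ in p..q, w τ := by
  rw [← intervalIntegral.integral_const_mul, ← integral_sub hwg (hw.const_mul c),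
    ← intervalIntegral.integral_const_mul]
  refine (abs_integral_le_integral_abs hpq).trans
    (integral_mono_on hpq (hwg.sub (hw.const_mul c)).abs (hw.const_mul δ) fun τ hτ => ?_)
  rw [show w τ * g τ - c * w τ = w τ * (g τ - c) by ring, abs_mul, abs_of_nonneg (hw0 τ hτ),
    mul_comm δ]
  exact mul_le_mul_of_nonneg_left (hg τ hτ) (hw0 τ hτ)

theorem abs_integral_kernel_mul_sub_sum_le {α : ℝ} (hα : α < 1) {t : ℕ → ℝ} (ht : Monotone t)
    (ht0 : 0 < t 0) {N : ℕ} {c : ℕ → ℝ} {g : ℝ → ℝ} {δ : ℝ}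
    (hg : ContinuousOn g (Icc (t 0) (t N)))
    (hgc : ∀ k < N, ∀ τ ∈ Icc (t k) (t (k + 1)), |g τ - c k| ≤ δ) :
    |(∫ τ in t 0..t N, log (t N / τ) ^ (-α) * τ⁻¹ * g τ)
        - ∑ k ∈ Finset.range N, c k * ∫ τ in t k..t (k + 1), log (t N / τ) ^ (-α) * τ⁻¹|
      ≤ δ * log (t N / t 0) ^ (1 - α) / (1 - α) := by
  set w : ℝ → ℝ := fun τ => log (t N / τ) ^ (-α) * τ⁻¹
  have hpos : ∀ k, 0 < t k := fun k => ht0.trans_le (ht k.zero_le)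
  have hw : ∀ k < N, IntervalIntegrable w volume (t k) (t (k + 1)) := fun k hk =>
    intervalIntegrable_log_div_rpow_mul_inv hα (hpos k) (ht k.le_succ) (ht hk)
  have hwg : ∀ k < N, IntervalIntegrable (fun τ => w τ * g τ) volume (t k) (t (k + 1)) :=
    fun k hk => (hw k hk).mul_continuousOn (hg.mono <| by
      rw [uIcc_of_le (ht k.le_succ)]
      exact Icc_subset_Icc (ht k.zero_le) (ht hk))
  have hw_total : ∫ τ in t 0..t N, w τ = log (t N / t 0) ^ (1 - α) / (1 - α) := by
    rw [integral_log_div_rpow_mul_inv hα ht0 (ht N.zero_le) le_rfl,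
      div_self (hpos N).ne', log_one, zero_rpow (sub_pos.2 hα).ne', sub_zero]
  rw [← sum_integral_adjacent_intervals hwg, ← Finset.sum_sub_distrib, mul_div_assoc,
    ← hw_total, ← sum_integral_adjacent_intervals hw, Finset.mul_sum]
  refine (Finset.abs_sum_le_sum_abs _ _).trans (Finset.sum_le_sum fun k hk => ?_)
  have hk := Finset.mem_range.1 hk
  exact abs_integral_mul_sub_const_mul_le (ht k.le_succ) (hw k hk) (hwg k hk)
    (fun τ hτ => log_div_rpow_mul_inv_nonneg ((hpos k).trans_le hτ.1) (hτ.2.trans (ht hk)))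
    (hgc k hk)

theorem abs_mul_deriv_sub_mul_slope_le {x x' x'' : ℝ → ℝ} {c d M₁ M₂ : ℝ} (hc : 0 ≤ c)
    (hcd : c < d) (hx' : ∀ τ ∈ Icc c d, HasDerivWithinAt x (x' τ) (Icc c d) τ)
    (hx'' : ∀ τ ∈ Icc c d, HasDerivWithinAt x' (x'' τ) (Icc c d) τ)
    (hM₁ : ∀ τ ∈ Icc c d, |x' τ| ≤ M₁) (hM₂ : ∀ τ ∈ Icc c d, |x'' τ| ≤ M₂)
    {τ : ℝ} (hτ : τ ∈ Icc c d) :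
    |τ * x' τ - d * (x d - x c) / (d - c)| ≤ (2 * M₁ + d * M₂) * (d - c) := by
  obtain ⟨σ, hσ, hslope⟩ := exists_hasDerivAt_eq_slope x x' hcd
    (fun s hs => (hx' s hs).continuousWithinAt)
    (fun s hs => (hx' s (Ioo_subset_Icc_self hs)).hasDerivAt (Icc_mem_nhds hs.1 hs.2))
  have hσ' : σ ∈ Icc c d := Ioo_subset_Icc_self hσ
  have hlip : |τ * x' τ - σ * x' σ| ≤ (M₁ + d * M₂) * |τ - σ| := by
    have h := (convex_Icc c d).norm_image_sub_le_of_norm_hasDerivWithin_le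
      (f := fun s => s * x' s) (C := M₁ + d * M₂)
      (fun s hs => (hasDerivWithinAt_id s _).mul (hx'' s hs))
      (fun s hs => ?_) hσ' hτ
    · simpa only [Real.norm_eq_abs] using h
    rw [Real.norm_eq_abs, id, one_mul]
    refine (abs_add_le _ _).trans (add_le_add (hM₁ s hs) ?_)
    rw [abs_mul, abs_of_nonneg (hc.trans hs.1)]
    exact mul_le_mul hs.2 (hM₂ s hs) (abs_nonneg _) (hc.trans hcd.le)
  have hτσ : |τ - σ| ≤ d - c := abs_sub_le_of_le_of_le hτ.1 hτ.2 hσ'.1 hσ'.2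
  have hσd : |σ - d| ≤ d - c := abs_sub_le_of_le_of_le hσ'.1 hσ'.2 hcd.le le_rfl
  have hM₁0 : 0 ≤ M₁ := (abs_nonneg _).trans (hM₁ σ hσ')
  have hM₂0 : 0 ≤ M₂ := (abs_nonneg _).trans (hM₂ σ hσ')
  rw [mul_div_assoc, ← hslope]
  calc |τ * x' τ - d * x' σ| = |(τ * x' τ - σ * x' σ) + x' σ * (σ - d)| := by ring_nf
    _ ≤ (M₁ + d * M₂) * (d - c) + M₁ * (d - c) := by
      refine (abs_add_le _ _).trans (add_le_add ?_ ?_)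
      · exact hlip.trans (mul_le_mul_of_nonneg_left hτσ
          (add_nonneg hM₁0 (mul_nonneg (hc.trans hcd.le) hM₂0)))
      · rw [abs_mul]
        exact mul_le_mul (hM₁ σ hσ') hσd (abs_nonneg _) hM₁0
    _ = (2 * M₁ + d * M₂) * (d - c) := by ring

noncomputable def logGrid (a h : ℝ) (k : ℕ) : ℝ := a * exp (k * h)

noncomputable def l1Weight (α : ℝ) (m : ℕ) : ℝ := (m : ℝ) ^ (1 - α) - ((m : ℝ) - 1) ^ (1 - α)

noncomputable def hadamardScheme (α a h : ℝ) (x : ℝ → ℝ) (N : ℕ) : ℝ :=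
  h ^ (1 - α) / (a * (1 - exp (-h)) * Gamma (2 - α)) *
    ∑ k ∈ Finset.Icc 1 N, l1Weight α (N - k + 1) *
      ((x (logGrid a h k) - x (logGrid a h (k - 1))) / exp (k * h)) * logGrid a h k

section LogGrid

variable {a h : ℝ}

@[simp]
theorem logGrid_zero : logGrid a h 0 = a := by simp [logGrid]

theorem logGrid_pos (ha : 0 < a) (k : ℕ) : 0 < logGrid a h k := mul_pos ha (exp_pos _)

theorem strictMono_logGrid (ha : 0 < a) (hh : 0 < h) : StrictMono (logGrid a h) := fun j k hjk =>
  mul_lt_mul_of_pos_left (exp_lt_exp.2 (mul_lt_mul_of_pos_right (by exact_mod_cast hjk) hh)) ha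

theorem log_logGrid_div_logGrid (ha : 0 < a) (j k : ℕ) :
    log (logGrid a h j / logGrid a h k) = ((j : ℝ) - k) * h := by
  rw [logGrid, logGrid, mul_div_mul_left _ _ ha.ne', ← exp_sub, log_exp]
  ring

theorem logGrid_le (ha : 0 < a) {b : ℝ} (hb : 0 < b) {k : ℕ} (hk : k * h ≤ log (b / a)) :
    logGrid a h k ≤ b :=
  calc logGrid a h k ≤ a * exp (log (b / a)) := mul_le_mul_of_nonneg_left (exp_le_exp.2 hk) ha.le
    _ = b := by rw [exp_log (div_pos hb ha)]; field_simp

theorem logGrid_succ_sub (k : ℕ) :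
    logGrid a h (k + 1) - logGrid a h k = logGrid a h (k + 1) * (1 - exp (-h)) := by
  simp only [logGrid, Nat.cast_succ, add_mul, one_mul, mul_sub, mul_one,
    mul_assoc, ← exp_add, add_neg_cancel_right]

end LogGrid

theorem integral_logGrid_log_div_rpow_mul_inv {α a h : ℝ} (hα : α < 1) (ha : 0 < a)
    (hh : 0 < h) {k N : ℕ} (hk : k < N) :
    ∫ τ in logGrid a h k..logGrid a h (k + 1), log (logGrid a h N / τ) ^ (-α) * τ⁻¹
      = h ^ (1 - α) * l1Weight α (N - k) / (1 - α) := by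
  have hmono := (strictMono_logGrid ha hh).monotone
  have hkN : (k : ℝ) + 1 ≤ N := by exact_mod_cast hk
  rw [integral_log_div_rpow_mul_inv hα (logGrid_pos ha k) (hmono k.le_succ) (hmono hk),
    log_logGrid_div_logGrid ha, log_logGrid_div_logGrid ha, l1Weight, Nat.cast_sub hk.le,
    Nat.cast_succ, show (N : ℝ) - (k + 1) = N - k - 1 by ring,
    mul_rpow (by linarith) hh.le, mul_rpow (by linarith) hh.le]
  ring

theorem hadamardScheme_eq_sum {α a h : ℝ} (hα : α < 1) (ha : 0 < a) (hh : 0 < h)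
    (x : ℝ → ℝ) (N : ℕ) :
    hadamardScheme α a h x N = 1 / Gamma (1 - α) * ∑ k ∈ Finset.range N,
      logGrid a h (k + 1) * (x (logGrid a h (k + 1)) - x (logGrid a h k))
          / (logGrid a h (k + 1) - logGrid a h k)
        * ∫ τ in logGrid a h k..logGrid a h (k + 1), log (logGrid a h N / τ) ^ (-α) * τ⁻¹ := by
  have hΓ : Gamma (2 - α) = (1 - α) * Gamma (1 - α) := by
    rw [show 2 - α = (1 - α) + 1 by ring, Gamma_add_one (sub_pos.2 hα).ne']
  have hexp : 1 - exp (-h) ≠ 0 := (sub_pos.2 (exp_lt_one_iff.2 (neg_neg_of_pos hh))).ne'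
  rw [hadamardScheme, ← Finset.Ico_add_one_right_eq_Icc, Finset.sum_Ico_eq_sum_range,
    Nat.add_sub_cancel, Finset.mul_sum, Finset.mul_sum]
  refine Finset.sum_congr rfl fun k hk => ?_
  have hk := Finset.mem_range.1 hk
  rw [integral_logGrid_log_div_rpow_mul_inv hα ha hh hk, logGrid_succ_sub, add_comm 1 k,
    Nat.add_sub_cancel, show N - (k + 1) + 1 = N - k by omega, hΓ]
  simp only [logGrid, Nat.cast_succ]
  field_simp

theorem abs_mul_deriv_sub_logGrid_slope_le {a b M₁ M₂ h : ℝ} {x x' x'' : ℝ → ℝ}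
    (ha : 0 < a) (hb : 0 < b)
    (hx' : ∀ τ ∈ Icc a b, HasDerivWithinAt x (x' τ) (Icc a b) τ)
    (hx'' : ∀ τ ∈ Icc a b, HasDerivWithinAt x' (x'' τ) (Icc a b) τ)
    (hM₁ : ∀ τ ∈ Icc a b, |x' τ| ≤ M₁) (hM₂ : ∀ τ ∈ Icc a b, |x'' τ| ≤ M₂)
    (hh : 0 < h) {k : ℕ} (hk : (k + 1) * h ≤ log (b / a))
    {τ : ℝ} (hτ : τ ∈ Icc (logGrid a h k) (logGrid a h (k + 1))) :
    |τ * x' τ - logGrid a h (k + 1) * (x (logGrid a h (k + 1)) - x (logGrid a h k))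
        / (logGrid a h (k + 1) - logGrid a h k)|
      ≤ (2 * M₁ + b * M₂) * b * h := by
  set t := logGrid a h
  have hlt : t k < t (k + 1) := strictMono_logGrid ha hh k.lt_succ_self
  have htb : t (k + 1) ≤ b := logGrid_le ha hb (by exact_mod_cast hk)
  have hat : a ≤ t k := by
    rw [← logGrid_zero (a := a) (h := h)]
    exact (strictMono_logGrid ha hh).monotone k.zero_le
  have hcell : Icc (t k) (t (k + 1)) ⊆ Icc a b := Icc_subset_Icc hat htb
  have hM₁0 : 0 ≤ M₁ := (abs_nonneg _).trans (hM₁ τ (hcell hτ))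
  have hM₂0 : 0 ≤ M₂ := (abs_nonneg _).trans (hM₂ τ (hcell hτ))
  have hstep : t (k + 1) - t k ≤ b * h := by
    rw [logGrid_succ_sub]
    exact mul_le_mul htb (by linarith [add_one_le_exp (-h)])
      (sub_nonneg.2 (exp_le_one_iff.2 (neg_nonpos.2 hh.le))) hb.le
  refine (abs_mul_deriv_sub_mul_slope_le (logGrid_pos ha k).le hlt
    (fun s hs => (hx' s (hcell hs)).mono hcell) (fun s hs => (hx'' s (hcell hs)).mono hcell)
    (fun s hs => hM₁ s (hcell hs)) (fun s hs => hM₂ s (hcell hs)) hτ).trans ?_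
  rw [mul_assoc]
  exact mul_le_mul (by gcongr) hstep (sub_nonneg.2 hlt.le) (by positivity)

theorem abs_integral_sub_hadamardScheme_le {a b α M₁ M₂ h : ℝ} {x x' x'' : ℝ → ℝ}
    (ha : 0 < a) (hab : a ≤ b) (hα : α < 1)
    (hx' : ∀ τ ∈ Icc a b, HasDerivWithinAt x (x' τ) (Icc a b) τ)
    (hx'' : ∀ τ ∈ Icc a b, HasDerivWithinAt x' (x'' τ) (Icc a b) τ)
    (hM₁ : ∀ τ ∈ Icc a b, |x' τ| ≤ M₁) (hM₂ : ∀ τ ∈ Icc a b, |x'' τ| ≤ M₂)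
    (hh : 0 < h) {N : ℕ} (hN : N * h ≤ log (b / a)) :
    |1 / Gamma (1 - α) * (∫ τ in a..logGrid a h N, log (logGrid a h N / τ) ^ (-α) * x' τ)
        - hadamardScheme α a h x N|
      ≤ (2 * M₁ + b * M₂) * b * log (b / a) ^ (1 - α) / ((1 - α) * Gamma (1 - α)) * h := by
  have hb : 0 < b := ha.trans_le hab
  have h1α : 0 < 1 - α := sub_pos.2 hα
  have hΓ : 0 < Gamma (1 - α) := Gamma_pos_of_pos h1α
  have hM₁0 : 0 ≤ M₁ := (abs_nonneg _).trans (hM₁ a (left_mem_Icc.2 hab))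
  have hM₂0 : 0 ≤ M₂ := (abs_nonneg _).trans (hM₂ a (left_mem_Icc.2 hab))
  set t := logGrid a h
  have ht0 : t 0 = a := logGrid_zero
  have hsub : Icc (t 0) (t N) ⊆ Icc a b := by
    rw [ht0]
    exact Icc_subset_Icc_right (logGrid_le ha hb hN)
  have hlocal : ∀ k < N, ∀ τ ∈ Icc (t k) (t (k + 1)),
      |τ * x' τ - t (k + 1) * (x (t (k + 1)) - x (t k)) / (t (k + 1) - t k)|
        ≤ (2 * M₁ + b * M₂) * b * h := fun k hk τ hτ =>
    abs_mul_deriv_sub_logGrid_slope_le ha hb hx' hx'' hM₁ hM₂ hh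
      ((mul_le_mul_of_nonneg_right (by exact_mod_cast hk) hh.le).trans hN) hτ
  have hφ : ContinuousOn (fun τ => τ * x' τ) (Icc (t 0) (t N)) :=
    continuousOn_id.mul fun τ hτ => (hx'' τ (hsub hτ)).continuousWithinAt.mono hsub
  have hintegrand : ∫ τ in a..t N, log (t N / τ) ^ (-α) * x' τ
      = ∫ τ in t 0..t N, log (t N / τ) ^ (-α) * τ⁻¹ * (τ * x' τ) := by
    rw [ht0]
    refine integral_congr fun τ hτ => ?_
    have hτ0 : 0 < τ := (lt_min ha (logGrid_pos ha N)).trans_le hτ.1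
    field_simp
  have hlog : log (t N / t 0) ^ (1 - α) ≤ log (b / a) ^ (1 - α) := by
    rw [log_logGrid_div_logGrid ha, Nat.cast_zero, sub_zero]
    exact rpow_le_rpow (by positivity) hN h1α.le
  rw [hintegrand, hadamardScheme_eq_sum hα ha hh, ← mul_sub, abs_mul,
    abs_of_pos (one_div_pos.2 hΓ)]
  calc 1 / Gamma (1 - α) * _
      ≤ 1 / Gamma (1 - α) * ((2 * M₁ + b * M₂) * b * h * log (t N / t 0) ^ (1 - α) / (1 - α)) := by
        gcongr
        exact abs_integral_kernel_mul_sub_sum_le hα (strictMono_logGrid ha hh).monotone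
          (logGrid_pos ha 0) hφ hlocal
    _ ≤ 1 / Gamma (1 - α) * ((2 * M₁ + b * M₂) * b * h * log (b / a) ^ (1 - α) / (1 - α)) := by
        gcongr
    _ = _ := by field_simp

/-- Uniform convergence, as `n → ∞`, of the discretization of the left
Hadamard fractional derivative of a `C²` function `x` on `[a,b]` over the logarithmic
grid `t_k = a·exp(k·ΔT)`, `ΔT = ln(b/a)/n`. -/
theorem hadamard_discretization_uniform_convergence
    (a b α : ℝ) (ha : 0 < a) (hab : a < b) (hα : α ∈ Set.Ioo (0 : ℝ) 1)
    (x x' x'' : ℝ → ℝ)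
    (hx' : ∀ τ ∈ Set.Icc a b, HasDerivWithinAt x (x' τ) (Set.Icc a b) τ)
    (hx'' : ∀ τ ∈ Set.Icc a b, HasDerivWithinAt x' (x'' τ) (Set.Icc a b) τ)
    (hx''cont : ContinuousOn x'' (Set.Icc a b)) :
    ∀ ε > (0 : ℝ), ∃ n₀ : ℕ, ∀ n : ℕ, n₀ ≤ n → ∀ N : ℕ, 1 ≤ N → N ≤ n →
      let ΔT : ℝ := Real.log (b / a) / n
      let t : ℕ → ℝ := fun k => a * Real.exp (k * ΔT)
      let ψ : ℝ := ΔT ^ (1 - α) / (a * (1 - Real.exp (-ΔT)) * Real.Gamma (2 - α))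
      let ω : ℕ → ℝ := fun k => (k : ℝ) ^ (1 - α) - ((k : ℝ) - 1) ^ (1 - α)
      -- the left Hadamard fractional derivative of `x` at `t_N`
      let D : ℝ := x a / Real.Gamma (1 - α) * Real.log (t N / a) ^ (-α)
        + (1 / Real.Gamma (1 - α)) * ∫ τ in a..(t N), Real.log (t N / τ) ^ (-α) * x' τ
      |D - x a / Real.Gamma (1 - α) * Real.log (t N / a) ^ (-α)
          - ψ * ∑ k ∈ Finset.Icc 1 N,
              ω (N - k + 1) * ((x (t k) - x (t (k - 1))) / Real.exp (k * ΔT)) * t k|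
        < ε := by
  intro ε hε
  obtain ⟨M₁, hM₁⟩ := isCompact_Icc.exists_bound_of_continuousOn
    fun τ hτ => (hx'' τ hτ).continuousWithinAt
  obtain ⟨M₂, hM₂⟩ := isCompact_Icc.exists_bound_of_continuousOn hx''cont
  set L := log (b / a)
  set K := (2 * M₁ + b * M₂) * b * L ^ (1 - α) / ((1 - α) * Gamma (1 - α))
  obtain ⟨n₀, hn₀⟩ := exists_nat_gt (K * L / ε)
  refine ⟨n₀ + 1, fun n hn₀n N _ hNn => ?_⟩
  have hn : (0 : ℝ) < n := by exact_mod_cast n₀.succ_pos.trans_le hn₀n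
  have hL : 0 < L := log_pos ((one_lt_div ha).2 hab)
  have hNL : N * (L / n) ≤ L := by
    rw [mul_div_left_comm]
    exact mul_le_of_le_one_right hL.le ((div_le_one hn).2 (by exact_mod_cast hNn))
  calc _ = |1 / Gamma (1 - α) * (∫ τ in a..logGrid a (L / n) N,
          log (logGrid a (L / n) N / τ) ^ (-α) * x' τ) - hadamardScheme α a (L / n) x N| := by
        rw [add_sub_cancel_left]; rfl
    _ ≤ K * (L / n) := abs_integral_sub_hadamardScheme_le ha hab.le hα.2 hx' hx''
        hM₁ hM₂ (div_pos hL hn) hNL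
    _ < ε := by
      have hn₀n' : (n₀ : ℝ) ≤ n := by exact_mod_cast n₀.le_succ.trans hn₀n
      rw [← mul_div_assoc, div_lt_iff₀ hn, mul_comm ε]
      exact (div_lt_iff₀ hε).1 (hn₀.trans_le hn₀n')
end

section
/- Let 0 < a < b, α ∈ (0,1), n a positive integer, ΔT = ln(b/a)/n, t_k = a·exp(k·ΔT), and let x : [a,b] → ℝ be of class C² with M₁ = max |x'| and M₂ = max |x''| on [a,b]. Then for every N ∈ {1,…,n}, (1/Γ(1−α))·∑_{k=1}^{N} ∫_{t_{k−1}}^{t_k} (ln(t_N/τ))^{−α}·(1/τ)·| x'(τ)·τ − ((x(t_k) − x(t_{k−1}))/(t_k − t_{k−1}))·t_k | dτ ≤ ((M₁ + (3/2)·M₂·b)/Γ(2−α))·a·(ΔT)^{1−α}·(exp(N·ΔT) − 1). -/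
/-!
On each cell `[t_{k-1}, t_k]` the mean value theorem gives a point `ξ` where the secant slope
equals `x' ξ`; writing the error as `(x' τ - x' ξ) τ + x' ξ (τ - t_k)` bounds it by
`(M₁ + M₂ b)(t_k - t_{k-1})`.
The Hadamard kernel `(ln (T/τ))^{-α} / τ` has the explicit antiderivative
`-(ln (T/τ))^{1-α} / (1-α)`, and subadditivity of `s ↦ s^{1-α}` bounds its integral over a cell
by `(ln (t_k/t_{k-1}))^{1-α} / (1-α) = ΔT^{1-α} / (1-α)`. Summing over the cells telescopes
`∑ (t_k - t_{k-1})` to `t_N - a = a (e^{N ΔT} - 1)`, and `(1-α) Γ(1-α) = Γ(2-α)`.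
-/

open Real Set intervalIntegral MeasureTheory

noncomputable def hadamardKernel (α T τ : ℝ) : ℝ := log (T / τ) ^ (-α) * (1 / τ)

section HadamardKernel

variable {α T u v τ : ℝ}

lemma hadamardKernel_nonneg (hτ : 0 < τ) (hτT : τ ≤ T) : 0 ≤ hadamardKernel α T τ :=
  mul_nonneg (rpow_nonneg (log_nonneg ((one_le_div hτ).2 hτT)) _) (one_div_nonneg.2 hτ.le)

lemma continuousOn_neg_log_div_rpow_div (hα : α ≤ 1) (hT : T ≠ 0) :
    ContinuousOn (fun σ => -(log (T / σ) ^ (1 - α) / (1 - α))) (Ioi 0) :=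
  (((continuousOn_const.div continuousOn_id fun _ hσ => (ne_of_gt hσ)).log
    fun _ hσ => div_ne_zero hT (ne_of_gt hσ)).rpow_const
    fun _ _ => Or.inr (sub_nonneg.2 hα)).div_const _ |>.neg

lemma hasDerivAt_neg_log_div_rpow_div (hα : α ≠ 1) (hτ : 0 < τ) (hτT : τ < T) :
    HasDerivAt (fun σ => -(log (T / σ) ^ (1 - α) / (1 - α))) (hadamardKernel α T τ) τ := by
  have hlog : 0 < log (T / τ) := log_pos ((one_lt_div hτ).2 hτT)
  have hdiv : HasDerivAt (fun σ => T / σ) (-(T / τ ^ 2)) τ := by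
    simpa [div_eq_mul_inv] using (hasDerivAt_inv hτ.ne').const_mul T
  refine ((hdiv.log (div_pos (hτ.trans hτT) hτ).ne').rpow_const (p := 1 - α)
    (Or.inl hlog.ne')).div_const _ |>.neg.congr_deriv ?_
  rw [hadamardKernel, show 1 - α - 1 = -α by ring]
  field_simp [sub_ne_zero.2 (Ne.symm hα), (hτ.trans hτT).ne']

lemma intervalIntegrable_hadamardKernel (hα : α < 1) (hu : 0 < u) (huv : u ≤ v) (hvT : v ≤ T) :
    IntervalIntegrable (hadamardKernel α T) volume u v :=
  (intervalIntegrable_iff_integrableOn_Ioc_of_le huv).2 <| integrableOn_deriv_of_nonneg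
    ((continuousOn_neg_log_div_rpow_div hα.le (hu.trans_le (huv.trans hvT)).ne').mono
      fun _ hσ => hu.trans_le hσ.1)
    (fun _ hσ => hasDerivAt_neg_log_div_rpow_div hα.ne (hu.trans hσ.1) (hσ.2.trans_le hvT))
    fun _ hσ => hadamardKernel_nonneg (hu.trans hσ.1) (hσ.2.le.trans hvT)

lemma integral_hadamardKernel (hα : α < 1) (hu : 0 < u) (huv : u ≤ v) (hvT : v ≤ T) :
    ∫ τ in u..v, hadamardKernel α T τ
      = (log (T / u) ^ (1 - α) - log (T / v) ^ (1 - α)) / (1 - α) := by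
  rw [integral_eq_sub_of_hasDeriv_right_of_le huv
    ((continuousOn_neg_log_div_rpow_div hα.le (hu.trans_le (huv.trans hvT)).ne').mono
      fun _ hσ => hu.trans_le hσ.1)
    (fun _ hσ => (hasDerivAt_neg_log_div_rpow_div hα.ne (hu.trans hσ.1)
      (hσ.2.trans_le hvT)).hasDerivWithinAt)
    (intervalIntegrable_hadamardKernel hα hu huv hvT)]
  ring

lemma integral_hadamardKernel_le (hα : α ∈ Ioo 0 1) (hu : 0 < u) (huv : u ≤ v) (hvT : v ≤ T) :
    ∫ τ in u..v, hadamardKernel α T τ ≤ log (v / u) ^ (1 - α) / (1 - α) := by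
  have hv : 0 < v := hu.trans_le huv
  have hsplit : log (T / u) = log (T / v) + log (v / u) := by
    rw [← log_mul (div_pos (hv.trans_le hvT) hv).ne' (div_pos hv hu).ne']
    field_simp
  rw [integral_hadamardKernel hα.2 hu huv hvT, hsplit]
  gcongr
  · linarith [hα.2]
  · rw [sub_le_iff_le_add']
    exact rpow_add_le_add_rpow (log_nonneg ((one_le_div hv).2 hvT))
      (log_nonneg ((one_le_div hu).2 huv)) (by linarith [hα.2]) (by linarith [hα.1])

end HadamardKernel

lemma abs_deriv_mul_sub_slope_mul_le {x x' x'' : ℝ → ℝ} {u v M₁ M₂ τ : ℝ} (hu : 0 ≤ u)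
    (huv : u < v) (hx' : ∀ σ ∈ Icc u v, HasDerivWithinAt x (x' σ) (Icc u v) σ)
    (hx'' : ∀ σ ∈ Icc u v, HasDerivWithinAt x' (x'' σ) (Icc u v) σ)
    (hM₁ : ∀ σ ∈ Icc u v, |x' σ| ≤ M₁) (hM₂ : ∀ σ ∈ Icc u v, |x'' σ| ≤ M₂)
    (hτ : τ ∈ Icc u v) :
    |x' τ * τ - (x v - x u) / (v - u) * v| ≤ (M₁ + M₂ * v) * (v - u) := by
  obtain ⟨ξ, hξ, hslope⟩ := exists_hasDerivAt_eq_slope x x' huv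
    (fun σ hσ => (hx' σ hσ).continuousWithinAt)
    (fun σ hσ => (hx' σ (Ioo_subset_Icc_self hσ)).hasDerivAt (Icc_mem_nhds hσ.1 hσ.2))
  have hξ' : ξ ∈ Icc u v := Ioo_subset_Icc_self hξ
  have hM₂_nonneg : 0 ≤ M₂ := (abs_nonneg _).trans (hM₂ τ hτ)
  have hlip : |x' τ - x' ξ| ≤ M₂ * (v - u) := by
    have := (convex_Icc u v).norm_image_sub_le_of_norm_hasDerivWithin_le hx'' hM₂ hξ' hτ
    refine this.trans (mul_le_mul_of_nonneg_left ?_ hM₂_nonneg)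
    rw [Real.norm_eq_abs, abs_sub_le_iff]
    constructor <;> linarith [hξ.1, hξ.2, hτ.1, hτ.2]
  have hτv : |τ - v| ≤ v - u := by
    rw [abs_sub_le_iff]
    constructor <;> linarith [hτ.1, hτ.2]
  have hτ_abs : |τ| ≤ v := by rw [abs_of_nonneg (hu.trans hτ.1)]; exact hτ.2
  rw [← hslope]
  calc |x' τ * τ - x' ξ * v| = |(x' τ - x' ξ) * τ + x' ξ * (τ - v)| := by ring_nf
    _ ≤ |x' τ - x' ξ| * |τ| + |x' ξ| * |τ - v| := by
        rw [← abs_mul, ← abs_mul]; exact abs_add_le _ _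
    _ ≤ M₂ * (v - u) * v + M₁ * (v - u) := by
        gcongr
        · exact (abs_nonneg _).trans (hM₁ ξ hξ')
        · exact hM₁ ξ hξ'
    _ = (M₁ + M₂ * v) * (v - u) := by ring

lemma integral_hadamardKernel_mul_abs_error_le {T u v α M₁ M₂ : ℝ}
    {x x' x'' : ℝ → ℝ} (hα : α ∈ Ioo 0 1) (hu : 0 < u) (huv : u < v) (hvT : v ≤ T)
    (hx' : ∀ σ ∈ Icc u v, HasDerivWithinAt x (x' σ) (Icc u v) σ)
    (hx'' : ∀ σ ∈ Icc u v, HasDerivWithinAt x' (x'' σ) (Icc u v) σ)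
    (hM₁ : ∀ σ ∈ Icc u v, |x' σ| ≤ M₁) (hM₂ : ∀ σ ∈ Icc u v, |x'' σ| ≤ M₂) :
    ∫ τ in u..v, hadamardKernel α T τ * |x' τ * τ - (x v - x u) / (v - u) * v|
      ≤ log (v / u) ^ (1 - α) / (1 - α) * ((M₁ + M₂ * v) * (v - u)) := by
  set C := (M₁ + M₂ * v) * (v - u)
  have hkernel : ∀ τ ∈ Ioc u v, 0 ≤ hadamardKernel α T τ := fun τ hτ =>
    hadamardKernel_nonneg (hu.trans hτ.1) (hτ.2.trans hvT)
  have hmono : ∫ τ in u..v, hadamardKernel α T τ * |x' τ * τ - (x v - x u) / (v - u) * v|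
      ≤ ∫ τ in u..v, hadamardKernel α T τ * C := by
    rw [integral_of_le huv.le, integral_of_le huv.le]
    refine integral_mono_of_nonneg ?_
      ((intervalIntegrable_hadamardKernel hα.2 hu huv.le hvT).mul_const C).1 ?_
    all_goals filter_upwards [ae_restrict_mem measurableSet_Ioc] with τ hτ
    · exact mul_nonneg (hkernel τ hτ) (abs_nonneg _)
    · exact mul_le_mul_of_nonneg_left (abs_deriv_mul_sub_slope_mul_le hu.le huv hx' hx'' hM₁ hM₂
        (Ioc_subset_Icc_self hτ)) (hkernel τ hτ)
  have hC : 0 ≤ C :=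
    mul_nonneg (add_nonneg ((abs_nonneg _).trans (hM₁ u (left_mem_Icc.2 huv.le)))
      (mul_nonneg ((abs_nonneg _).trans (hM₂ u (left_mem_Icc.2 huv.le))) (hu.trans huv).le))
      (sub_nonneg.2 huv.le)
  calc _ ≤ _ := hmono
    _ = (∫ τ in u..v, hadamardKernel α T τ) * C := integral_mul_const _ _
    _ ≤ _ := by gcongr; exact integral_hadamardKernel_le hα hu huv.le hvT

lemma sum_Icc_sub_pred {M : Type*} [AddCommGroup M] (f : ℕ → M) (N : ℕ) :
    ∑ k ∈ Finset.Icc 1 N, (f k - f (k - 1)) = f N - f 0 := by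
  induction N with
  | zero => simp
  | succ N ih => rw [Finset.sum_Icc_succ_top (by omega), ih]; simp

lemma sum_integral_hadamardKernel_mul_abs_error_le {t : ℕ → ℝ} {b h α M₁ M₂ : ℝ}
    {N : ℕ} {x x' x'' : ℝ → ℝ} (hα : α ∈ Ioo 0 1) (ht : StrictMono t) (ht0 : 0 < t 0)
    (htN : t N ≤ b) (hstep : ∀ k ∈ Finset.Icc 1 N, log (t k / t (k - 1)) ≤ h)
    (hx' : ∀ σ ∈ Icc (t 0) b, HasDerivWithinAt x (x' σ) (Icc (t 0) b) σ)
    (hx'' : ∀ σ ∈ Icc (t 0) b, HasDerivWithinAt x' (x'' σ) (Icc (t 0) b) σ)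
    (hM₁ : ∀ σ ∈ Icc (t 0) b, |x' σ| ≤ M₁) (hM₂ : ∀ σ ∈ Icc (t 0) b, |x'' σ| ≤ M₂) :
    ∑ k ∈ Finset.Icc 1 N, ∫ τ in t (k - 1)..t k, hadamardKernel α (t N) τ
        * |x' τ * τ - (x (t k) - x (t (k - 1))) / (t k - t (k - 1)) * t k|
      ≤ h ^ (1 - α) / (1 - α) * ((M₁ + M₂ * b) * (t N - t 0)) := by
  have hb : t 0 ≤ b := (ht.monotone (Nat.zero_le N)).trans htN
  have hM₂_nonneg : 0 ≤ M₂ := (abs_nonneg _).trans (hM₂ _ (left_mem_Icc.2 hb))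
  have hcell : ∀ k ∈ Finset.Icc 1 N,
      ∫ τ in t (k - 1)..t k, hadamardKernel α (t N) τ
          * |x' τ * τ - (x (t k) - x (t (k - 1))) / (t k - t (k - 1)) * t k|
        ≤ h ^ (1 - α) / (1 - α) * ((M₁ + M₂ * b) * (t k - t (k - 1))) := by
    intro k hk
    obtain ⟨hk1, hkN⟩ := Finset.mem_Icc.1 hk
    have hlt : t (k - 1) < t k := ht (by omega)
    have hsub : Icc (t (k - 1)) (t k) ⊆ Icc (t 0) b :=
      Icc_subset_Icc (ht.monotone (Nat.zero_le _)) ((ht.monotone hkN).trans htN)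
    refine (integral_hadamardKernel_mul_abs_error_le hα
      (ht0.trans_le (ht.monotone (Nat.zero_le _))) hlt (ht.monotone hkN)
      (fun σ hσ => (hx' σ (hsub hσ)).mono hsub) (fun σ hσ => (hx'' σ (hsub hσ)).mono hsub)
      (fun σ hσ => hM₁ σ (hsub hσ)) (fun σ hσ => hM₂ σ (hsub hσ))).trans ?_
    have hM₁_nonneg : 0 ≤ M₁ := (abs_nonneg _).trans (hM₁ _ (left_mem_Icc.2 hb))
    have hlog : 0 ≤ log (t k / t (k - 1)) :=
      log_nonneg ((one_le_div (ht0.trans_le (ht.monotone (Nat.zero_le _)))).2 hlt.le)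
    have hα' : 0 < 1 - α := sub_pos.2 hα.2
    have hh : 0 ≤ h := hlog.trans (hstep k hk)
    have htk : 0 ≤ t k := ht0.le.trans (ht.monotone (Nat.zero_le k))
    gcongr
    · exact hstep k hk
    · exact (ht.monotone hkN).trans htN
  calc _ ≤ _ := Finset.sum_le_sum hcell
    _ = _ := by rw [← Finset.mul_sum, ← Finset.mul_sum, sum_Icc_sub_pred]

lemma log_mul_exp_div_mul_exp_pred {a h : ℝ} (ha : a ≠ 0) {k : ℕ} (hk : 1 ≤ k) :
    log (a * exp (k * h) / (a * exp ((k - 1 : ℕ) * h))) = h := by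
  rw [mul_div_mul_left _ _ ha, ← exp_sub, log_exp, Nat.cast_sub hk]
  ring

lemma mul_exp_mul_log_div_div {a b : ℝ} (ha : 0 < a) (hb : 0 < b) {n : ℝ} (hn : n ≠ 0) :
    a * exp (n * (log (b / a) / n)) = b := by
  rw [mul_div_cancel₀ _ hn, exp_log (div_pos hb ha)]
  field_simp

theorem hadamard_quadrature_error_bound_general
    (a b α : ℝ) (ha : 0 < a) (hab : a < b) (hα : α ∈ Set.Ioo (0 : ℝ) 1)
    (n : ℕ) (hn : 0 < n)
    (x x' x'' : ℝ → ℝ)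
    (hx' : ∀ τ ∈ Set.Icc a b, HasDerivWithinAt x (x' τ) (Set.Icc a b) τ)
    (hx'' : ∀ τ ∈ Set.Icc a b, HasDerivWithinAt x' (x'' τ) (Set.Icc a b) τ)
    (M₁ M₂ : ℝ)
    (hM₁ : IsGreatest ((fun τ => |x' τ|) '' Set.Icc a b) M₁)
    (hM₂ : IsGreatest ((fun τ => |x'' τ|) '' Set.Icc a b) M₂)
    (N : ℕ) (hNn : N ≤ n) :
    let ΔT : ℝ := Real.log (b / a) / n
    let t : ℕ → ℝ := fun j => a * Real.exp (j * ΔT)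
    (1 / Real.Gamma (1 - α)) * ∑ k ∈ Finset.Icc 1 N,
        ∫ τ in (t (k - 1))..(t k),
          Real.log (t N / τ) ^ (-α) * (1 / τ)
            * |x' τ * τ - (x (t k) - x (t (k - 1))) / (t k - t (k - 1)) * t k|
      ≤ (M₁ + (3 / 2) * M₂ * b) / Real.Gamma (2 - α)
          * a * ΔT ^ (1 - α) * (Real.exp (N * ΔT) - 1) := by
  intro ΔT t
  have hΔT : 0 < ΔT := div_pos (log_pos ((one_lt_div ha).2 hab)) (Nat.cast_pos.2 hn)
  have ht : StrictMono t := fun i j hij => by simp only [t]; gcongr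
  have ht0 : t 0 = a := by simp [t]
  have htn : t n = b := mul_exp_mul_log_div_div ha (ha.trans hab) (Nat.cast_ne_zero.2 hn.ne')
  rw [← ht0] at hx' hx'' hM₁ hM₂
  have hsum := sum_integral_hadamardKernel_mul_abs_error_le hα ht (ht0 ▸ ha)
    (htn ▸ ht.monotone hNn)
    (fun k hk => (log_mul_exp_div_mul_exp_pred ha.ne' (Finset.mem_Icc.1 hk).1).le) hx' hx''
    (fun σ hσ => hM₁.2 (mem_image_of_mem _ hσ)) (fun σ hσ => hM₂.2 (mem_image_of_mem _ hσ))
  have hM₂_nonneg : 0 ≤ M₂ := by obtain ⟨⟨σ, -, rfl⟩, -⟩ := hM₂; exact abs_nonneg _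
  have hΓ : Real.Gamma (2 - α) = (1 - α) * Real.Gamma (1 - α) := by
    rw [show 2 - α = (1 - α) + 1 by ring, Real.Gamma_add_one (sub_pos.2 hα.2).ne']
  have htN : t N - t 0 = a * (exp (N * ΔT) - 1) := by simp only [t]; simp; ring
  rw [htN] at hsum
  calc _ ≤ 1 / Real.Gamma (1 - α)
        * (ΔT ^ (1 - α) / (1 - α) * ((M₁ + M₂ * b) * (a * (exp (N * ΔT) - 1)))) :=
        mul_le_mul_of_nonneg_left hsum (one_div_nonneg.2 (Gamma_pos_of_pos (sub_pos.2 hα.2)).le)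
    _ = (M₁ + M₂ * b) / Real.Gamma (2 - α) * a * ΔT ^ (1 - α) * (exp (N * ΔT) - 1) := by
        rw [hΓ]; field_simp
    _ ≤ _ := by
        have hM : M₁ + M₂ * b ≤ M₁ + 3 / 2 * M₂ * b := by nlinarith [ha.trans hab]
        have hexp : 0 ≤ exp (N * ΔT) - 1 := sub_nonneg.2 (one_le_exp (by positivity))
        gcongr
        exact (Real.Gamma_pos_of_pos (by linarith [hα.2])).le

/-- Bound for the aggregated quadrature error of the discretization of
the left Hadamard fractional derivative on the logarithmic grid. -/
theorem hadamard_quadrature_error_bound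
    (a b α : ℝ) (ha : 0 < a) (hab : a < b) (hα : α ∈ Set.Ioo (0 : ℝ) 1)
    (n : ℕ) (hn : 0 < n)
    (x x' x'' : ℝ → ℝ)
    (hx' : ∀ τ ∈ Set.Icc a b, HasDerivWithinAt x (x' τ) (Set.Icc a b) τ)
    (hx'' : ∀ τ ∈ Set.Icc a b, HasDerivWithinAt x' (x'' τ) (Set.Icc a b) τ)
    (hx''cont : ContinuousOn x'' (Set.Icc a b))
    (M₁ M₂ : ℝ)
    (hM₁ : IsGreatest ((fun τ => |x' τ|) '' Set.Icc a b) M₁)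
    (hM₂ : IsGreatest ((fun τ => |x'' τ|) '' Set.Icc a b) M₂)
    (N : ℕ) (hN₁ : 1 ≤ N) (hNn : N ≤ n) :
    let ΔT : ℝ := Real.log (b / a) / n
    let t : ℕ → ℝ := fun j => a * Real.exp (j * ΔT)
    (1 / Real.Gamma (1 - α)) * ∑ k ∈ Finset.Icc 1 N,
        ∫ τ in (t (k - 1))..(t k),
          Real.log (t N / τ) ^ (-α) * (1 / τ)
            * |x' τ * τ - (x (t k) - x (t (k - 1))) / (t k - t (k - 1)) * t k|
      ≤ (M₁ + (3 / 2) * M₂ * b) / Real.Gamma (2 - α)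
          * a * ΔT ^ (1 - α) * (Real.exp (N * ΔT) - 1) :=
  hadamard_quadrature_error_bound_general a b α ha hab hα n hn x x' x'' hx' hx'' M₁ M₂ hM₁ hM₂ N hNn
end
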